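/- The grafting product on rooted trees, τ₁ ↷ τ₂ = Σ_{v ∈ V(τ₂)} τ₁ ∘_v τ₂ (attaching the root of τ₁ to vertex v of τ₂), satisfies the left pre-Lie identity: τ₁ ↷ (τ₂ ↷ τ₃) − (τ₁ ↷ τ₂) ↷ τ₃ = τ₂ ↷ (τ₁ ↷ τ₃) − (τ₂ ↷ τ₁) ↷ τ₃. -/

import Mathlib

/-- Planar representatives of rooted trees. -/
inductive PT : Type
  | node : List PT → PT

namespace PT

/-- Grafting of a tree `τ` into a forest: attach the root of `τ` by a new edge to
one of the vertices of one of the trees, in all possible ways. -/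
def graftTF (τ : PT) : List PT → Multiset (List PT)
  | [] => 0
  | PT.node l :: ω =>
      {PT.node (τ :: l) :: ω}
      + (graftTF τ l).map (fun l' => PT.node l' :: ω)
      + (graftTF τ ω).map (fun ω' => PT.node l :: ω')
decreasing_by
  all_goals simp_wf <;> omega

/-- `τ₁ ↷ τ₂ = Σ_{v ∈ V(τ₂)} τ₁ ∘_v τ₂`: attach the root of `τ₁` by a new edge to
each vertex of `τ₂`. -/
def graftAll (τ : PT) : PT → Multiset PT
  | PT.node l => PT.node (τ :: l) ::ₘ (graftTF τ l).map PT.node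

/-- An injective code of the isomorphism class of the underlying non-planar rooted
tree: `code (B⁺(τ₁⋯τ_k)) = ∏ᵢ p_{code τᵢ}` with `p_j` the `j`-th prime. -/
noncomputable def code : PT → ℕ
  | .node l => (l.attach.map (fun c => Nat.nth Nat.Prime (code c.1))).prod
decreasing_by
  simp_wf
  have := List.sizeOf_lt_of_mem c.2
  omega

/-- The canonical planar representative of the isomorphism class of a tree:
recursively sort all branch lists by code.  Identifies `PT` modulo planarity with
non-planar rooted trees. -/
noncomputable def norm : PT → PT
  | .node l =>
      PT.node (List.insertionSort (fun a b => code a ≤ code b)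
        (l.attach.map (fun c => norm c.1)))
decreasing_by
  simp_wf
  have := List.sizeOf_lt_of_mem c.2
  omega

end PT

/-- The grafting product `τ ↷ σ` with values in the free real vector space on
(isomorphism classes of) rooted trees. -/
noncomputable def gr (τ σ : PT) : PT →₀ ℝ :=
  ((PT.graftAll τ σ).map (fun t => Finsupp.single (PT.norm t) (1 : ℝ))).sum

/-- The bilinear extension of `↷` to the free vector space on rooted trees. -/
noncomputable def G (f g : PT →₀ ℝ) : PT →₀ ℝ :=
  f.sum (fun t a => g.sum (fun s b => (a * b) • gr t s))

/-!
Grafting `s` into `u` and then `t` into the result attaches `t` either to a vertex of the copy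
of `s`, which produces `(t ↷ s) ↷ u`, or to a vertex of `u`; the latter terms are the trees
obtained from `u` by grafting `t` and `s` at an arbitrary pair of (not necessarily distinct)
vertices, a sum that is symmetric in `t` and `s` once children are unordered. Hence the
associator `t ↷ (s ↷ u) - (t ↷ s) ↷ u` is symmetric on trees, and by bilinearity everywhere.

Planar trees are compared through `norm`, which by injectivity of the prime code only depends on
the multiset of normalized branches; in particular grafting is compatible with `norm`.
-/

theorem LinearMap.leftPreLie_of_basis {R ι M : Type*} [CommRing R] [AddCommGroup M] [Module R M]
    (b : Module.Basis ι R M) (B : M →ₗ[R] M →ₗ[R] M)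
    (h : ∀ x y z : ι, B (b x) (B (b y) (b z)) - B (B (b x) (b y)) (b z) =
      B (b y) (B (b x) (b z)) - B (B (b y) (b x)) (b z))
    (f g k : M) : B f (B g k) - B (B f g) k = B g (B f k) - B (B g f) k := by
  let assoc := ((LinearMap.llcomp R M M M).comp B).compl₂ B - B.compr₂ B
  have hsymm : assoc = assoc.flip :=
    b.ext fun x => b.ext fun y => b.ext fun z => by simpa [assoc] using h x y z
  exact congr($hsymm f g k)

namespace PT

theorem induction {motive : PT → Prop}
    (node : ∀ l, (∀ c ∈ l, motive c) → motive (node l)) : ∀ t, motive t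
  | .node l => node l fun c _ => induction node c

theorem forest_induction {motive : List PT → Prop} (nil : motive [])
    (cons : ∀ l ω, motive l → motive ω → motive (node l :: ω)) : ∀ m, motive m
  | [] => nil
  | .node l :: ω => cons l ω (forest_induction nil cons l) (forest_induction nil cons ω)

noncomputable instance : DecidableEq PT := Classical.decEq _

abbrev CodeLE (a b : PT) : Prop := code a ≤ code b

instance : Std.Total CodeLE := ⟨fun a b => Nat.le_total (code a) (code b)⟩
instance : IsTrans PT CodeLE := ⟨fun _ _ _ => le_trans⟩

theorem code_node (l : List PT) :
    code (node l) = (l.map fun c => Nat.nth Nat.Prime (code c)).prod := by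
  rw [code]
  simp

theorem norm_node (l : List PT) : norm (node l) = node ((l.map norm).insertionSort CodeLE) := by
  rw [norm]
  simp

theorem code_norm : ∀ t, code (norm t) = code t := by
  refine induction fun l ih => ?_
  rw [norm_node, code_node, code_node,
    ((List.perm_insertionSort CodeLE _).map _).prod_eq, List.map_map]
  exact congrArg List.prod (List.map_congr_left fun c hc => by simp [ih c hc])

theorem norm_norm : ∀ t, norm (norm t) = norm t := by
  refine induction fun l ih => ?_
  have hfix : ∀ c ∈ (l.map norm).insertionSort CodeLE, norm c = c := by
    intro c hc
    obtain ⟨a, ha, rfl⟩ := List.mem_map.1 ((List.mem_insertionSort _).1 hc)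
    exact ih a ha
  rw [norm_node, norm_node, List.map_congr_left hfix, List.map_id',
    (List.pairwise_insertionSort CodeLE _).insertionSort_eq]

theorem map_code_eq_of_code_node_eq {l l' : List PT} (h : code (node l) = code (node l')) :
    (l.map code : Multiset ℕ) = l'.map code := by
  have hprime : ∀ m : List PT, ∀ p ∈ m.map fun c => Nat.nth Nat.Prime (code c), p.Prime := by
    intro m p hp
    obtain ⟨c, -, rfl⟩ := List.mem_map.1 hp
    exact Nat.nth_mem_of_infinite Nat.infinite_setOfPred_prime _
  rw [code_node, code_node] at h
  have hperm := (Nat.primeFactorsList_unique h (hprime l)).trans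
    (Nat.primeFactorsList_unique rfl (hprime l')).symm
  apply Multiset.map_injective (Nat.nth_injective Nat.infinite_setOfPred_prime)
  simpa [List.map_map, Function.comp_def] using hperm

theorem norm_node_congr_of_code {l l' : List PT} (h : (l.map norm).Perm (l'.map norm))
    (hcode : ∀ a ∈ l, ∀ b ∈ l', code a = code b → norm a = norm b) :
    norm (node l) = norm (node l') := by
  rw [norm_node, norm_node]
  congr 1
  refine List.Perm.eq_of_pairwise ?_ (List.pairwise_insertionSort _ _)
    (List.pairwise_insertionSort _ _)
    (((List.perm_insertionSort _ _).trans h).trans (List.perm_insertionSort _ _).symm)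
  intro _ _ ha' hb' hab hba
  obtain ⟨a, ha, rfl⟩ := List.mem_map.1 ((List.mem_insertionSort _).1 ha')
  obtain ⟨b, hb, rfl⟩ := List.mem_map.1 ((List.mem_insertionSort _).1 hb')
  exact hcode a ha b hb (by simpa only [code_norm] using le_antisymm hab hba)

theorem norm_eq_of_code_eq : ∀ t s : PT, code t = code s → norm t = norm s := by
  refine induction fun l ih => ?_
  rintro ⟨l'⟩ h
  have hrel : Multiset.Rel (fun a b => code a = code b) (l : Multiset PT) l' := by
    rw [← Multiset.rel_map (f := code) (g := code), Multiset.rel_eq]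
    exact map_code_eq_of_code_node_eq h
  have hperm : (l.map norm : Multiset PT) = l'.map norm := by
    rw [← Multiset.map_coe, ← Multiset.map_coe, ← Multiset.rel_eq, Multiset.rel_map]
    exact hrel.mono fun a ha b _ hab => ih a ha b hab
  exact norm_node_congr_of_code (Multiset.coe_eq_coe.1 hperm) fun a ha b _ => ih a ha b

theorem norm_node_congr {l l' : List PT} (h : (l.map norm).Perm (l'.map norm)) :
    norm (node l) = norm (node l') :=
  norm_node_congr_of_code h fun a _ b _ => norm_eq_of_code_eq a b

noncomputable def normForest (l : List PT) : Multiset PT := l.map norm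

@[simp]
theorem normForest_cons (c : PT) (l : List PT) : normForest (c :: l) = norm c ::ₘ normForest l :=
  rfl

noncomputable def bPlus (m : Multiset PT) : PT := norm (node m.toList)

theorem norm_node_eq_bPlus (l : List PT) : norm (node l) = bPlus (normForest l) := by
  have h : ((normForest l).toList : Multiset PT) = l.map norm := Multiset.coe_toList _
  refine norm_node_congr (((Multiset.coe_eq_coe.1 h).map norm).trans ?_).symm
  simp only [List.map_map, Function.comp_def, norm_norm, List.Perm.refl]

theorem graftTF_nil (t : PT) : graftTF t [] = 0 := by rw [graftTF]

theorem graftTF_cons (t : PT) (l ω : List PT) :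
    graftTF t (node l :: ω) =
      {node (t :: l) :: ω} + (graftTF t l).map (fun l' => node l' :: ω)
        + (graftTF t ω).map (fun ω' => node l :: ω') := by
  rw [graftTF]

theorem graftAll_node (t : PT) (l : List PT) :
    graftAll t (node l) = node (t :: l) ::ₘ (graftTF t l).map node := by
  rw [graftAll]

theorem map_normForest_graftTF (t : PT) (m : List PT) :
    (graftTF t m).map normForest =
      (m : Multiset PT).bind fun c =>
        (graftAll t c).map fun x => norm x ::ₘ (normForest m).erase (norm c) := by
  induction m with
  | nil => simp [graftTF_nil]
  | cons c ω ih =>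
    obtain ⟨l⟩ := c
    have htail : ((ω : Multiset PT).bind fun c => (graftAll t c).map
          fun x => norm x ::ₘ (normForest (node l :: ω)).erase (norm c)) =
        ((graftTF t ω).map normForest).map (norm (node l) ::ₘ ·) := by
      rw [ih, Multiset.map_bind]
      refine Multiset.bind_congr fun c hc => ?_
      have hmem : norm c ∈ normForest ω := Multiset.mem_map_of_mem norm hc
      rw [normForest_cons, Multiset.erase_cons_tail_of_mem hmem, Multiset.map_map]
      exact Multiset.map_congr rfl fun x _ => Multiset.cons_swap _ _ _
    rw [← Multiset.cons_coe, Multiset.cons_bind, htail, graftTF_cons, graftAll_node]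
    simp [Multiset.map_map, Function.comp_def]

theorem map_norm_graftAll_node (s : PT) (w : List PT) :
    (graftAll s (node w)).map norm =
      bPlus (norm s ::ₘ normForest w) ::ₘ (w : Multiset PT).bind fun c =>
        ((graftAll s c).map norm).map fun k => bPlus (k ::ₘ (normForest w).erase (norm c)) := by
  have hnode : norm ∘ node = bPlus ∘ normForest := funext norm_node_eq_bPlus
  rw [graftAll_node, Multiset.map_cons, norm_node_eq_bPlus, normForest_cons, Multiset.map_map,
    hnode, ← Multiset.map_map, map_normForest_graftTF, Multiset.map_bind]
  simp only [Multiset.map_map, Function.comp_def]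

theorem map_norm_graftAll_congr :
    ∀ u t t' : PT, norm t = norm t' →
      (graftAll t u).map norm = (graftAll t' (norm u)).map norm := by
  refine induction fun m ih t t' htt => ?_
  set L := (m.map norm).insertionSort CodeLE
  have hL : (L : Multiset PT) = normForest m :=
    Multiset.coe_eq_coe.2 (List.perm_insertionSort CodeLE _)
  have hLnorm : ∀ c ∈ L, norm c = c := by
    intro c hc
    obtain ⟨a, -, rfl⟩ := List.mem_map.1 ((List.mem_insertionSort _).1 hc)
    exact norm_norm a
  have hnfL : normForest L = normForest m := by
    rw [normForest, List.map_congr_left hLnorm, List.map_id', hL]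
  rw [map_norm_graftAll_node, norm_node, map_norm_graftAll_node, htt, hnfL]
  congr 1
  rw [Multiset.bind_congr fun c hc => by rw [ih c hc t t' htt]]
  trans (normForest m).bind fun d =>
    ((graftAll t' d).map norm).map fun k => bPlus (k ::ₘ (normForest m).erase d)
  · rw [normForest, ← Multiset.map_coe, Multiset.bind_map]
  · rw [← hL]
    exact Multiset.bind_congr fun c hc => by rw [hLnorm c hc]

theorem map_norm_graftAll_norm_left (t u : PT) :
    (graftAll (norm t) u).map norm = (graftAll t u).map norm := by
  rw [map_norm_graftAll_congr u (norm t) t (norm_norm t), map_norm_graftAll_congr u t t rfl]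

theorem map_norm_graftAll_norm_right (t u : PT) :
    (graftAll t (norm u)).map norm = (graftAll t u).map norm :=
  (map_norm_graftAll_congr u t t rfl).symm

/-- Grafting `t` at a vertex `v` and `s` at a vertex `w` of a forest, over all pairs `(v, w)`,
including `v = w`. -/
def graftPairTF (t s : PT) : List PT → Multiset (List PT)
  | [] => 0
  | node l :: ω =>
      {node (t :: s :: l) :: ω}
      + (graftTF t l).map (fun l' => node (s :: l') :: ω)
      + (graftTF t ω).map (fun ω' => node (s :: l) :: ω')
      + (graftTF s l).map (fun l' => node (t :: l') :: ω)
      + (graftTF s ω).map (fun ω' => node (t :: l) :: ω')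
      + (graftTF s l).bind (fun l' => (graftTF t ω).map (fun ω' => node l' :: ω'))
      + (graftTF s ω).bind (fun ω' => (graftTF t l).map (fun l' => node l' :: ω'))
      + (graftPairTF t s l).map (fun l' => node l' :: ω)
      + (graftPairTF t s ω).map (fun ω' => node l :: ω')

theorem graftPairTF_nil (t s : PT) : graftPairTF t s [] = 0 := by rw [graftPairTF]

theorem graftPairTF_cons (t s : PT) (l ω : List PT) :
    graftPairTF t s (node l :: ω) =
      {node (t :: s :: l) :: ω}
      + (graftTF t l).map (fun l' => node (s :: l') :: ω)
      + (graftTF t ω).map (fun ω' => node (s :: l) :: ω')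
      + (graftTF s l).map (fun l' => node (t :: l') :: ω)
      + (graftTF s ω).map (fun ω' => node (t :: l) :: ω')
      + (graftTF s l).bind (fun l' => (graftTF t ω).map (fun ω' => node l' :: ω'))
      + (graftTF s ω).bind (fun ω' => (graftTF t l).map (fun l' => node l' :: ω'))
      + (graftPairTF t s l).map (fun l' => node l' :: ω)
      + (graftPairTF t s ω).map (fun ω' => node l :: ω') := by
  rw [graftPairTF]

theorem bind_graftTF_graftTF (t s : PT) (m : List PT) :
    (graftTF s m).bind (graftTF t) = graftPairTF t s m + (graftAll t s).bind (graftTF · m) := by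
  induction m using forest_induction with
  | nil => simp [graftTF_nil, graftPairTF_nil]
  | cons l ω ihl ihω =>
    obtain ⟨ls⟩ := s
    rw [graftTF_cons, graftPairTF_cons, graftAll_node]
    simp only [Multiset.add_bind, Multiset.singleton_bind, Multiset.bind_map,
      Multiset.cons_bind, graftTF_cons, Multiset.bind_add, Multiset.bind_singleton,
      Multiset.map_add]
    simp only [← Multiset.map_bind]
    rw [ihl, ihω]
    simp only [graftAll_node, Multiset.cons_bind, Multiset.bind_map, Multiset.map_add]
    simp only [Multiset.map_singleton, Multiset.map_map,
      Function.comp_def, ← Multiset.singleton_add, Multiset.map_add]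
    abel

theorem map_normForest_graftPairTF_comm (t s : PT) (m : List PT) :
    (graftPairTF t s m).map normForest = (graftPairTF s t m).map normForest := by
  induction m using forest_induction with
  | nil => rw [graftPairTF_nil, graftPairTF_nil]
  | cons l ω ihl ihω =>
    have hnode : (fun l' : List PT => norm (node l') ::ₘ normForest ω) =
        (bPlus · ::ₘ normForest ω) ∘ normForest := by
      funext l'
      rw [Function.comp_apply, norm_node_eq_bPlus]
    have hl : (graftPairTF t s l).map (fun l' => norm (node l') ::ₘ normForest ω) =
        (graftPairTF s t l).map (fun l' => norm (node l') ::ₘ normForest ω) := by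
      rw [hnode, ← Multiset.map_map, ← Multiset.map_map, ihl]
    have hω : (graftPairTF t s ω).map (fun ω' => norm (node l) ::ₘ normForest ω') =
        (graftPairTF s t ω).map (fun ω' => norm (node l) ::ₘ normForest ω') := by
      rw [← Function.comp_def (norm (node l) ::ₘ ·), ← Multiset.map_map, ← Multiset.map_map,
        ihω]
    rw [graftPairTF_cons, graftPairTF_cons]
    simp only [Multiset.map_add, Multiset.map_singleton, Multiset.map_map,
      Multiset.map_bind, Function.comp_def, normForest_cons]
    rw [norm_node_congr (l := t :: s :: l) (l' := s :: t :: l) (List.Perm.swap _ _ _),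
      Multiset.bind_map_comm (graftTF s l) (graftTF t ω),
      Multiset.bind_map_comm (graftTF s ω) (graftTF t l),
      hl, hω]
    abel

theorem map_normForest_graftTF_preLie (t s : PT) (m : List PT) :
    ((graftTF s m).bind (graftTF t)).map normForest
        + ((graftAll s t).bind (graftTF · m)).map normForest =
      ((graftTF t m).bind (graftTF s)).map normForest
        + ((graftAll t s).bind (graftTF · m)).map normForest := by
  rw [bind_graftTF_graftTF, bind_graftTF_graftTF, Multiset.map_add, Multiset.map_add,
    map_normForest_graftPairTF_comm]
  abel

theorem graftTF_singleton (t u : PT) : graftTF t [u] = (graftAll t u).map ([·]) := by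
  obtain ⟨l⟩ := u
  simp [graftTF_cons, graftTF_nil, graftAll_node, Multiset.map_map]

theorem map_norm_graftAll_preLie (t s u : PT) :
    ((graftAll s u).bind (graftAll t)).map norm + ((graftAll s t).bind (graftAll · u)).map norm =
      ((graftAll t u).bind (graftAll s)).map norm
        + ((graftAll t s).bind (graftAll · u)).map norm := by
  apply Multiset.map_injective fun _ _ => (Multiset.singleton_inj (α := PT)).1
  simpa [graftTF_singleton, Multiset.bind_map, Multiset.map_bind, Multiset.map_map,
    Function.comp_def, normForest] using map_normForest_graftTF_preLie t s [u]

noncomputable def treeSum (M : Multiset PT) : PT →₀ ℝ :=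
  (M.map fun t => Finsupp.single (norm t) 1).sum

theorem treeSum_add (M N : Multiset PT) : treeSum (M + N) = treeSum M + treeSum N := by
  simp [treeSum]

theorem treeSum_congr {M N : Multiset PT} (h : M.map norm = N.map norm) :
    treeSum M = treeSum N := by
  have hM : ∀ M : Multiset PT, treeSum M = ((M.map norm).map (Finsupp.single · 1)).sum := by
    simp [treeSum, Multiset.map_map]
  rw [hM, hM, h]

theorem treeSum_bind (M : Multiset PT) (f : PT → Multiset PT) :
    treeSum (M.bind f) = (M.map fun x => treeSum (f x)).sum := by
  simp [treeSum, Multiset.map_bind, Multiset.sum_bind]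

theorem linearCombination_treeSum {N : Type*} [AddCommMonoid N] [Module ℝ N] {φ : PT → N}
    (hφ : ∀ x, φ (norm x) = φ x) (M : Multiset PT) :
    Finsupp.linearCombination ℝ φ (treeSum M) = (M.map φ).sum := by
  simp [treeSum, map_multiset_sum, Multiset.map_map, hφ]

theorem gr_eq_treeSum (t s : PT) : gr t s = treeSum (graftAll t s) := rfl

theorem gr_norm_left (t u : PT) : gr (norm t) u = gr t u :=
  treeSum_congr (map_norm_graftAll_norm_left t u)

theorem gr_norm_right (t u : PT) : gr t (norm u) = gr t u :=
  treeSum_congr (map_norm_graftAll_norm_right t u)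

noncomputable def graftBilin : (PT →₀ ℝ) →ₗ[ℝ] (PT →₀ ℝ) →ₗ[ℝ] PT →₀ ℝ :=
  Finsupp.linearCombination ℝ fun t => Finsupp.linearCombination ℝ (gr t)

theorem G_eq_graftBilin (f g : PT →₀ ℝ) : G f g = graftBilin f g := by
  simp [G, graftBilin, Finsupp.linearCombination_apply, LinearMap.finsupp_sum_apply,
    Finsupp.smul_sum, mul_smul]

theorem graftBilin_single_left (t : PT) (X : PT →₀ ℝ) :
    graftBilin (.single t 1) X = Finsupp.linearCombination ℝ (gr t) X := by
  simp [graftBilin]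

theorem graftBilin_single_right (X : PT →₀ ℝ) (u : PT) :
    graftBilin X (.single u 1) = Finsupp.linearCombination ℝ (gr · u) X := by
  have h : graftBilin.flip (.single u 1) = Finsupp.linearCombination ℝ (gr · u) := by
    ext t
    simp [graftBilin]
  exact LinearMap.congr_fun h X

theorem graftBilin_single_treeSum (t : PT) (M : Multiset PT) :
    graftBilin (.single t 1) (treeSum M) = treeSum (M.bind (graftAll t)) := by
  rw [graftBilin_single_left, linearCombination_treeSum (gr_norm_right t), treeSum_bind]
  rfl

theorem graftBilin_treeSum_single (M : Multiset PT) (u : PT) :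
    graftBilin (treeSum M) (.single u 1) = treeSum (M.bind (graftAll · u)) := by
  rw [graftBilin_single_right, linearCombination_treeSum (gr_norm_left · u), treeSum_bind]
  rfl

theorem graftBilin_single_single (t s : PT) :
    graftBilin (.single t 1) (.single s 1) = treeSum (graftAll t s) := by
  simp [graftBilin, gr_eq_treeSum]

theorem graftBilin_preLie_single (t s u : PT) :
    graftBilin (.single t 1) (graftBilin (.single s 1) (.single u 1))
        - graftBilin (graftBilin (.single t 1) (.single s 1)) (.single u 1) =
      graftBilin (.single s 1) (graftBilin (.single t 1) (.single u 1))
        - graftBilin (graftBilin (.single s 1) (.single t 1)) (.single u 1) := by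
  simp only [graftBilin_single_single, graftBilin_single_treeSum, graftBilin_treeSum_single,
    sub_eq_sub_iff_add_eq_add, ← treeSum_add]
  exact treeSum_congr (by simpa only [Multiset.map_add] using map_norm_graftAll_preLie t s u)

end PT

/-- the grafting product on rooted trees satisfies the left pre-Lie
identity `x↷(y↷z) − (x↷y)↷z = y↷(x↷z) − (y↷x)↷z`. -/
theorem grafting_preLie (f g h : PT →₀ ℝ) :
    G f (G g h) - G (G f g) h = G g (G f h) - G (G g f) h := by
  simp only [PT.G_eq_graftBilin]
  exact LinearMap.leftPreLie_of_basis Finsupp.basisSingleOne PT.graftBilin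
    (by simpa using PT.graftBilin_preLie_single) f g h
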